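/- arXiv:1801.09139 — 2 statements merged into one kernel-verified Lean document; each statement's English description precedes it below -/
import Mathlib

section
/- For any polynomial f in k[x_0,...,x_m] over an algebraic extension k of F_q, the projective reduction f̄ of f is zero if and only if f lies in the ideal Γ_q(k) generated by the Fermat polynomials x_i^q x_j - x_i x_j^q, 0 ≤ i < j ≤ m. -/
open MvPolynomial Finset

/-- Reduce an exponent modulo `q-1`: unchanged if `≤ q-1`, otherwise the
representative in `{1,...,q-1}` congruent to it modulo `q-1`. -/
def redExp (q a : ℕ) : ℕ := if a ≤ q - 1 then a else (a - 1) % (q - 1) + 1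

/-- Projective reduction of a monomial (given by its exponent vector): all exponents
below the top variable of the support are reduced modulo `q-1`, and the difference is
transferred to the exponent of the top variable. -/
noncomputable def projRed (q : ℕ) {m : ℕ} (μ : Fin (m + 1) →₀ ℕ) : Fin (m + 1) →₀ ℕ :=
  if h : μ.support.Nonempty then
    letI ℓ := μ.support.max' h
    Finsupp.equivFunOnFinite.symm fun i =>
      if i < ℓ then redExp q (μ i)
      else if i = ℓ then μ ℓ + ∑ j ∈ Finset.univ.filter (· < ℓ), (μ j - redExp q (μ j))
      else 0
  else 0

/-- Projective reduction of a polynomial: the linear extension of projective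
reduction of monomials. -/
noncomputable def polyRed (q : ℕ) {m : ℕ} {k : Type} [CommRing k]
    (f : MvPolynomial (Fin (m + 1)) k) : MvPolynomial (Fin (m + 1)) k :=
  f.support.sum fun μ => monomial (projRed q μ) (coeff μ f)

/-- The ideal generated by the Fermat polynomials `X i ^ q * X j - X i * X j ^ q`. -/
noncomputable def fermatIdeal (q m : ℕ) (k : Type) [CommRing k] : Ideal (MvPolynomial (Fin (m + 1)) k) :=
  Ideal.span {f | ∃ i j : Fin (m + 1), i < j ∧ f = X i ^ q * X j - X i * X j ^ q}

/-- The leading exponent (exponent vector of the leading monomial) of a multivariate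
polynomial with respect to a monomial order. -/
noncomputable def lmExp {σ : Type} (mo : MonomialOrder σ) {R : Type} [CommSemiring R]
    (f : MvPolynomial σ R) : σ →₀ ℕ :=
  mo.toSyn.symm (f.support.sup fun μ => mo.toSyn μ)

/-!
A Fermat polynomial is `X s * X ℓ * (X s ^ (q - 1) - X ℓ ^ (q - 1))`, so modulo `Γ_q` a monomial
divisible by `X s ^ q * X ℓ` with `s < ℓ` may trade `X s ^ (q - 1)` for `X ℓ ^ (q - 1)`. Such a
trade preserves the degree and every exponent modulo `q - 1` (within `1, …, q - 1`), hence the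
projective reduction. Trading while some exponent below a nonzero one exceeds `q - 1` pushes mass
to higher variables, so it terminates, at `μ̄`; thus `f ≡ f̄ mod Γ_q`. Conversely `f ↦ f̄` is
linear and kills every multiple of a Fermat polynomial.
-/

lemma redExp_le (q a : ℕ) : redExp q a ≤ a := by
  unfold redExp
  split_ifs with h
  · rfl
  · have := Nat.mod_le (a - 1) (q - 1); omega

lemma redExp_of_le {q a : ℕ} (h : a ≤ q - 1) : redExp q a = a := if_pos h

lemma redExp_eq_zero_iff {q a : ℕ} : redExp q a = 0 ↔ a = 0 := by
  unfold redExp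
  split_ifs
  · rfl
  · exact ⟨False.elim, by omega⟩

lemma redExp_add_self {q : ℕ} (hq : 0 < q) (a : ℕ) : redExp q (a + q) = redExp q (a + 1) := by
  have hq' : a + q - 1 = a + (q - 1) := by omega
  unfold redExp
  rw [if_neg (by omega), hq', Nat.add_mod_right]
  split_ifs with h
  · rw [Nat.mod_eq_of_lt (by omega)]
  · simp

lemma Finsupp.degree_eq_sum_lt_max'_add {σ : Type*} [Fintype σ] [LinearOrder σ] (μ : σ →₀ ℕ)
    (hne : μ.support.Nonempty) :
    μ.degree = ∑ j with j < μ.support.max' hne, μ j + μ (μ.support.max' hne) := by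
  rw [Finsupp.degree_eq_sum, ← Finset.sum_filter_add_sum_filter_not univ (· < μ.support.max' hne)]
  congr 1
  refine sum_eq_single_of_mem _ (mem_filter.2 ⟨mem_univ _, lt_irrefl _⟩) fun t ht hne' => ?_
  by_contra h
  exact hne' (le_antisymm (le_max' _ t (Finsupp.mem_support_iff.2 h))
    (not_lt.1 (mem_filter.1 ht).2))

section projRed

variable {q m : ℕ}

lemma projRed_apply {μ : Fin (m + 1) →₀ ℕ} (hne : μ.support.Nonempty) (i : Fin (m + 1)) :
    projRed q μ i =
      if i < μ.support.max' hne then redExp q (μ i)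
      else if i = μ.support.max' hne then
        μ.degree - ∑ j with j < μ.support.max' hne, redExp q (μ j)
      else 0 := by
  have hle : ∑ j with j < μ.support.max' hne, redExp q (μ j)
      ≤ ∑ j with j < μ.support.max' hne, μ j :=
    sum_le_sum fun j _ => redExp_le q (μ j)
  simp only [projRed, dif_pos hne, Finsupp.coe_equivFunOnFinite_symm,
    sum_tsub_distrib _ fun j _ => redExp_le q (μ j), μ.degree_eq_sum_lt_max'_add hne]
  split_ifs with h₁ h₂ <;> omega

lemma projRed_congr {μ ν : Fin (m + 1) →₀ ℕ} (hdeg : μ.degree = ν.degree)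
    (hred : ∀ t, redExp q (μ t) = redExp q (ν t)) : projRed q μ = projRed q ν := by
  have hs : μ.support = ν.support := by
    ext t
    rw [Finsupp.mem_support_iff, Finsupp.mem_support_iff, ne_eq, ne_eq,
      ← redExp_eq_zero_iff (q := q), hred, redExp_eq_zero_iff]
  by_cases hne : μ.support.Nonempty
  · ext i
    rw [projRed_apply hne, projRed_apply (hs ▸ hne)]
    simp only [hs, hdeg, hred]
  · have hμ : μ = 0 := by simpa using hne
    have hν : ν = 0 := by simpa [hs] using hne
    rw [hμ, hν]

lemma projRed_eq_self {μ : Fin (m + 1) →₀ ℕ}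
    (hμ : ∀ s ℓ, s < ℓ → μ ℓ ≠ 0 → μ s ≤ q - 1) : projRed q μ = μ := by
  by_cases hne : μ.support.Nonempty
  · have htop : μ (μ.support.max' hne) ≠ 0 := Finsupp.mem_support_iff.1 (max'_mem _ hne)
    have hlow : ∀ j, j < μ.support.max' hne → redExp q (μ j) = μ j :=
      fun j hj => redExp_of_le (hμ j _ hj htop)
    ext i
    rw [projRed_apply hne, μ.degree_eq_sum_lt_max'_add hne,
      sum_congr rfl fun j hj => hlow j (mem_filter.1 hj).2]
    split_ifs with h₁ h₂
    · exact hlow i h₁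
    · rw [h₂, add_tsub_cancel_left]
    · by_contra h
      exact h₁ (lt_of_le_of_ne (le_max' _ i (Finsupp.mem_support_iff.2 (Ne.symm h))) h₂)
  · rw [projRed, dif_neg hne]
    simpa [eq_comm] using hne

lemma projRed_add_single_swap (hq : 0 < q) (τ : Fin (m + 1) →₀ ℕ) (i j : Fin (m + 1)) :
    projRed q (τ + (Finsupp.single i q + Finsupp.single j 1))
      = projRed q (τ + (Finsupp.single i 1 + Finsupp.single j q)) := by
  refine projRed_congr (by simp only [map_add, Finsupp.degree_single]; omega) fun t => ?_
  simp only [Finsupp.add_apply, Finsupp.single_apply]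
  split_ifs <;> simp only [add_zero, ← add_assoc, redExp_add_self hq, add_comm _ 1, zero_add]

end projRed

lemma Finsupp.exists_eq_add_single_add_single {σ : Type*} {μ : σ →₀ ℕ} {i j : σ} (hij : i ≠ j)
    {a b : ℕ} (hi : a ≤ μ i) (hj : b ≤ μ j) : ∃ τ, μ = τ + (single i a + single j b) := by
  classical
  refine ⟨μ - (single i a + single j b), (tsub_add_cancel_of_le fun t => ?_).symm⟩
  simp only [Finsupp.add_apply, Finsupp.single_apply]
  split_ifs with h₁ h₂ h₂
  · exact absurd (h₁.trans h₂.symm) hij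
  all_goals subst_vars; omega

section reduction

variable {q m : ℕ} {k : Type} [CommRing k]

lemma monomial_mul_fermat (τ : Fin (m + 1) →₀ ℕ) (c : k) (i j : Fin (m + 1)) :
    monomial τ c * (X i ^ q * X j - X i * X j ^ q)
      = monomial (τ + (Finsupp.single i q + Finsupp.single j 1)) c
        - monomial (τ + (Finsupp.single i 1 + Finsupp.single j q)) c := by
  rw [X_pow_eq_monomial, X_pow_eq_monomial]
  simp only [X, mul_sub, monomial_mul, mul_one]

lemma monomial_sub_monomial_swap_mem {i j : Fin (m + 1)} (hij : i < j)
    (τ : Fin (m + 1) →₀ ℕ) (c : k) :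
    monomial (τ + (Finsupp.single i q + Finsupp.single j 1)) c
      - monomial (τ + (Finsupp.single i 1 + Finsupp.single j q)) c ∈ fermatIdeal q m k := by
  rw [← monomial_mul_fermat]
  exact Ideal.mul_mem_left _ _ (Ideal.subset_span ⟨i, j, hij, rfl⟩)

lemma monomial_sub_monomial_projRed_mem (hq : 2 ≤ q) (μ : Fin (m + 1) →₀ ℕ) (c : k) :
    monomial μ c - monomial (projRed q μ) c ∈ fermatIdeal q m k := by
  induction hn : Finsupp.weight (fun t : Fin (m + 1) => m - (t : ℕ)) μ
    using Nat.strong_induction_on generalizing μ with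
  | _ n ih =>
  by_cases hμ : ∀ s ℓ, s < ℓ → μ ℓ ≠ 0 → μ s ≤ q - 1
  · rw [projRed_eq_self hμ, sub_self]
    exact zero_mem _
  push Not at hμ
  obtain ⟨s, ℓ, hsℓ, hℓ, hs⟩ := hμ
  obtain ⟨τ, rfl⟩ := Finsupp.exists_eq_add_single_add_single (μ := μ) hsℓ.ne (a := q) (b := 1)
    (by omega) (by omega)
  have hlt : Finsupp.weight (fun t : Fin (m + 1) => m - (t : ℕ))
      (τ + (Finsupp.single s 1 + Finsupp.single ℓ q)) < n := by
    rw [← hn]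
    simp only [map_add, Finsupp.weight_single, smul_eq_mul]
    have hdist : m - (ℓ : ℕ) < m - s := by have := ℓ.is_le; omega
    generalize m - (ℓ : ℕ) = B at hdist ⊢
    generalize m - (s : ℕ) = A at hdist ⊢
    nlinarith
  have h := add_mem (monomial_sub_monomial_swap_mem hsℓ τ c) (ih _ hlt _ rfl)
  rwa [sub_add_sub_cancel, ← projRed_add_single_swap (by omega)] at h

lemma polyRed_eq_mapDomainLinearMap :
    polyRed (m := m) (k := k) q = AddMonoidAlgebra.mapDomainLinearMap k k (projRed q) := by
  ext f : 1
  exact (AddMonoidAlgebra.ofCoeff_sum _ _).symm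

lemma sub_polyRed_mem (hq : 2 ≤ q) (f : MvPolynomial (Fin (m + 1)) k) :
    f - polyRed q f ∈ fermatIdeal q m k := by
  have hsum : f - polyRed q f
      = ∑ μ ∈ f.support, (monomial μ (coeff μ f) - monomial (projRed q μ) (coeff μ f)) := by
    rw [sum_sub_distrib, support_sum_monomial_coeff, polyRed]
  rw [hsum]
  exact Ideal.sum_mem _ fun μ _ => monomial_sub_monomial_projRed_mem hq μ _

lemma polyRed_mul_fermat (hq : 0 < q) (r : MvPolynomial (Fin (m + 1)) k) (i j : Fin (m + 1)) :
    polyRed q (r * (X i ^ q * X j - X i * X j ^ q)) = 0 := by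
  rw [polyRed_eq_mapDomainLinearMap]
  induction r using MvPolynomial.induction_on' with
  | monomial τ c =>
    rw [monomial_mul_fermat, map_sub, ← single_eq_monomial, ← single_eq_monomial,
      AddMonoidAlgebra.mapDomainLinearMap_single, AddMonoidAlgebra.mapDomainLinearMap_single,
      projRed_add_single_swap hq, sub_self]
  | add r₁ r₂ h₁ h₂ => rw [add_mul, map_add, h₁, h₂, add_zero]

lemma polyRed_eq_zero_of_mem (hq : 0 < q) {f : MvPolynomial (Fin (m + 1)) k}
    (hf : f ∈ fermatIdeal q m k) : polyRed q f = 0 := by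
  obtain ⟨c, hc, rfl⟩ := Submodule.mem_span_set.1 hf
  rw [polyRed_eq_mapDomainLinearMap, Finsupp.sum, map_sum]
  refine sum_eq_zero fun g hg => ?_
  obtain ⟨i, j, -, rfl⟩ := hc hg
  rw [smul_eq_mul, ← polyRed_eq_mapDomainLinearMap, polyRed_mul_fermat hq]

end reduction

theorem polyRed_eq_zero_iff_general (q m : ℕ)
    (Fq : Type) [Field Fq] [Fintype Fq] (hq : Fintype.card Fq = q)
    (k : Type) [Field k]
    (f : MvPolynomial (Fin (m + 1)) k) :
    polyRed q f = 0 ↔ f ∈ fermatIdeal q m k := by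
  have hq2 : 2 ≤ q := hq ▸ Fintype.one_lt_card
  refine ⟨fun h => ?_, polyRed_eq_zero_of_mem (by omega)⟩
  simpa only [h, sub_zero] using sub_polyRed_mem hq2 f

/-- Over an algebraic extension `k` of `F_q`, the projective reduction of a polynomial is
zero iff the polynomial lies in the ideal generated by the Fermat polynomials. -/
theorem polyRed_eq_zero_iff (q m : ℕ)
    (Fq : Type) [Field Fq] [Fintype Fq] (hq : Fintype.card Fq = q)
    (k : Type) [Field k] [Algebra Fq k] [Algebra.IsAlgebraic Fq k]
    (f : MvPolynomial (Fin (m + 1)) k) :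
    polyRed q f = 0 ↔ f ∈ fermatIdeal q m k :=
  polyRed_eq_zero_iff_general q m Fq hq k f
end

section
/- For every monomial order ≺ with x_0 ≻ ... ≻ x_m, the projective reduction of a monomial does not increase it: μ̄ ⪯ μ for all monomials μ in x_0,...,x_m. -/
open MvPolynomial Finset

namespace MonomialOrder

variable {σ : Type*} (mo : MonomialOrder σ)

lemma toSyn_single (i : σ) (n : ℕ) :
    mo.toSyn (Finsupp.single i n) = n • mo.toSyn (Finsupp.single i 1) := by
  rw [← map_nsmul, Finsupp.smul_single_one]

lemma toSyn_single_sum_le (s : Finset σ) (ℓ : σ) (d : σ → ℕ)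
    (hs : ∀ j ∈ s, mo.toSyn (Finsupp.single ℓ 1) ≤ mo.toSyn (Finsupp.single j 1)) :
    mo.toSyn (Finsupp.single ℓ (∑ j ∈ s, d j)) ≤ ∑ j ∈ s, mo.toSyn (Finsupp.single j (d j)) := by
  rw [toSyn_single, Finset.sum_smul]
  refine Finset.sum_le_sum fun j hj => ?_
  rw [mo.toSyn_single j]
  exact nsmul_le_nsmul_right (hs j hj) (d j)

lemma toSyn_le_of_add_eq_add {a b c d : σ →₀ ℕ} (h : a + b = c + d)
    (hdb : mo.toSyn d ≤ mo.toSyn b) : mo.toSyn a ≤ mo.toSyn c := by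
  have : mo.toSyn a + mo.toSyn b ≤ mo.toSyn c + mo.toSyn b := by
    rw [← map_add, h, map_add]
    exact add_le_add_right hdb _
  exact le_of_add_le_add_right this

end MonomialOrder

section projRed

variable (q : ℕ) {m : ℕ} (μ : Fin (m + 1) →₀ ℕ)

lemma projRed_zero : projRed q (0 : Fin (m + 1) →₀ ℕ) = 0 := by
  simp [projRed]

lemma projRed_add_sum_single (h : μ.support.Nonempty) :
    projRed q μ + ∑ j ∈ univ.filter (· < μ.support.max' h),
        Finsupp.single j (μ j - redExp q (μ j)) =
      μ + Finsupp.single (μ.support.max' h)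
        (∑ j ∈ univ.filter (· < μ.support.max' h), (μ j - redExp q (μ j))) := by
  ext i
  simp only [projRed, dif_pos h, Finsupp.coe_equivFunOnFinite_symm, Finsupp.add_apply,
    Finsupp.finsetSum_apply, Finsupp.single_apply, Finset.sum_ite_eq', Finset.mem_filter_univ]
  set ℓ := μ.support.max' h
  rcases lt_trichotomy i ℓ with hi | rfl | hi
  · have := redExp_le q (μ i)
    simp only [hi, hi.ne', if_true, if_false]
    omega
  · simp
  · have hμi : μ i = 0 :=
      Finsupp.notMem_support_iff.mp fun hmem => (μ.support.le_max' i hmem).not_gt hi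
    simp [hi.ne, hi.ne', hi.not_gt, hμi]

end projRed

theorem projRed_le_general (q m : ℕ)
    (mo : MonomialOrder (Fin (m + 1)))
    (hvar : ∀ i j : Fin (m + 1), i < j →
      mo.toSyn (Finsupp.single j 1) < mo.toSyn (Finsupp.single i 1))
    (μ : Fin (m + 1) →₀ ℕ) :
    mo.toSyn (projRed q μ) ≤ mo.toSyn μ := by
  by_cases h : μ.support.Nonempty
  · refine mo.toSyn_le_of_add_eq_add (projRed_add_sum_single q μ h) ?_
    rw [map_sum]
    exact mo.toSyn_single_sum_le _ _ _ fun j hj => (hvar j _ (by simpa using hj)).le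
  · obtain rfl : μ = 0 := by simpa using h
    rw [projRed_zero]

/-- Projective reduction does not increase a monomial with respect to any monomial order in
which `x_0 ≻ x_1 ≻ ... ≻ x_m`. -/
theorem projRed_le (q m : ℕ) (hq : IsPrimePow q)
    (mo : MonomialOrder (Fin (m + 1)))
    (hvar : ∀ i j : Fin (m + 1), i < j →
      mo.toSyn (Finsupp.single j 1) < mo.toSyn (Finsupp.single i 1))
    (μ : Fin (m + 1) →₀ ℕ) :
    mo.toSyn (projRed q μ) ≤ mo.toSyn μ :=
  projRed_le_general q m mo hvar μ
end
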